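/- Characterization of basic derivability via base extensions: T ⊢_B u holds if and only if for every base C extending B, if ⊢_C t holds for every t ∈ T, then ⊢_C u holds. (Here ⊢_C s abbreviates ∅ ⊢_C s.) -/
import Mathlib


/-- Labels -/
abbrev Lbl := ℕ
/-- Propositional atoms -/
abbrev Atm := ℕ

/-- A basic sentence: a labelled atom `p^x` or a relational assumption `xRy`. -/
inductive BSent where
  | atom : Atm → Lbl → BSent
  | rel : Lbl → Lbl → BSent
deriving DecidableEq

/-- A basic sequent `(P ⇒ p)`. -/
abbrev BSeq := List BSent × BSent

/-- A basic rule `((P₁ ⇒ p₁, …, Pₙ ⇒ pₙ) ⇒ r)`. -/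
abbrev BRule := List BSeq × BSent

/-- A base is a set of basic rules. -/
abbrev Base := Set BRule

/-- Basic derivability `S ⊢_B p`, generated by (Ref) and (App). -/
inductive Der (B : Base) : Set BSent → BSent → Prop where
  | ref {S : Set BSent} {s : BSent} : s ∈ S → Der B S s
  | app {S : Set BSent} {r : BSent} {Ps : List BSeq} :
      (Ps, r) ∈ B →
      (∀ q ∈ Ps, Der B (S ∪ {a | a ∈ q.1}) q.2) →
      Der B S r

theorem Der.weaken {B : Base} {S S' : Set BSent} {r : BSent}
    (h : Der B S r) (hss : S ⊆ S') : Der B S' r := by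
  induction h generalizing S' with
  | ref hs => exact Der.ref (hss hs)
  | app hr _ ih =>
      exact Der.app hr fun q hq => ih q hq (Set.union_subset_union_left _ hss)

theorem Der.cut {B C : Base} {S : Set BSent} {r : BSent}
    (h : Der B S r) (hBC : B ⊆ C) :
    ∀ S' : Set BSent, (∀ s ∈ S, Der C S' s) → Der C S' r := by
  induction h with
  | ref hs => exact fun S' hS' => hS' _ hs
  | app hr _ ih =>
      intro S' hS'
      refine Der.app (hBC hr) fun q hq => ih q hq _ ?_
      rintro s (hs | hs)
      · exact (hS' s hs).weaken Set.subset_union_left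
      · exact Der.ref (Or.inr hs)

/-- Characterization of basic derivability via base extensions. -/
theorem basic_der_iff_extensions (B : Base) (T : Set BSent) (u : BSent) :
    Der B T u ↔
      ∀ C : Base, B ⊆ C → (∀ t ∈ T, Der C ∅ t) → Der C ∅ u := by
  constructor
  · intro h C hBC hT
    exact h.cut hBC ∅ (fun s hs => hT s hs)
  · intro h
    set C : Base := B ∪ {r | ∃ t ∈ T, r = ([], t)} with hC
    have hBC : B ⊆ C := Set.subset_union_left
    have hT : ∀ t ∈ T, Der C ∅ t := by
      intro t ht
      exact Der.app (Or.inr ⟨t, ht, rfl⟩) (by simp)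
    have hu : Der C ∅ u := h C hBC hT
    have collapse : ∀ S r, Der C S r → Der B (S ∪ T) r := by
      intro S r hd
      induction hd with
      | ref hs => exact Der.ref (Or.inl hs)
      | @app S r Ps hr _ ih =>
          rcases hr with hr | ⟨t, ht, heq⟩
          · refine Der.app hr fun q hq => (ih q hq).weaken ?_
            intro x hx
            rcases hx with (hx | hx) | hx
            · exact Or.inl (Or.inl hx)
            · exact Or.inr hx
            · exact Or.inl (Or.inr hx)
          · cases heq
            exact Der.ref (Or.inr ht)
    have := collapse ∅ u hu
    simpa using this
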